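/- arXiv:1510.01812 — 6 statements merged into one kernel-verified Lean document; each statement's English description precedes it below -/
import Mathlib

section
/- Let b > 0 and define g(x) = (1-x)·ln(1 + bx/(1-x)) for 0 < x < 1. Then g is strictly concave on (0,1), with second derivative g''(x) = b^2/((x-1)·((b-1)x+1)^2) < 0. -/
/-!
`g` is the perspective `x ↦ (1 - x) f (x / (1 - x))` of the concave function `f t = log (1 + b t)`,
which is why it is concave. Directly: `g' x = -log (1 + b x / (1 - x)) + b / ((b - 1) x + 1)`,
and differentiating once more, `(b - 1) x + 1 + (b - 1) (1 - x) = b` collapses `g''` to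
`b² / ((x - 1) ((b - 1) x + 1)²)`, negative on `(0, 1)` since `(b - 1) x + 1 = b x + (1 - x) > 0`.
-/

open Real Set

namespace LogPerspective

variable {b x : ℝ}

noncomputable def g (b x : ℝ) : ℝ := (1 - x) * log (1 + b * x / (1 - x))

noncomputable def g' (b x : ℝ) : ℝ := -log (1 + b * x / (1 - x)) + b / ((b - 1) * x + 1)

lemma one_add_mul_div_one_sub (hx : x ≠ 1) :
    1 + b * x / (1 - x) = ((b - 1) * x + 1) / (1 - x) := by
  field_simp [sub_ne_zero.mpr hx.symm]
  ring

lemma sub_one_mul_add_one_pos (hb : 0 ≤ b) (hx : x ∈ Ioo (0 : ℝ) 1) : 0 < (b - 1) * x + 1 := by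
  nlinarith [hx.1, hx.2]

lemma hasDerivAt_one_add_mul_div_one_sub (hx : x ≠ 1) :
    HasDerivAt (fun y => 1 + b * y / (1 - y)) (b / (1 - x) ^ 2) x := by
  have h1x : 1 - x ≠ 0 := sub_ne_zero.mpr hx.symm
  refine ((((hasDerivAt_id x).const_mul b).div ((hasDerivAt_id x).const_sub 1) h1x).const_add 1
    ).congr_deriv ?_
  simp only [id]
  field_simp
  ring

lemma hasDerivAt_g (hx : x ≠ 1) (hu : (b - 1) * x + 1 ≠ 0) : HasDerivAt (g b) (g' b x) x := by
  have h1x : 1 - x ≠ 0 := sub_ne_zero.mpr hx.symm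
  have hlog := (hasDerivAt_one_add_mul_div_one_sub (b := b) hx).log
    (by rw [one_add_mul_div_one_sub hx]; exact div_ne_zero hu h1x)
  refine (((hasDerivAt_id x).const_sub 1).mul hlog).congr_deriv ?_
  rw [g', one_add_mul_div_one_sub hx]
  simp only [id]
  field_simp

lemma hasDerivAt_g' (hx : x ≠ 1) (hu : (b - 1) * x + 1 ≠ 0) :
    HasDerivAt (g' b) (b ^ 2 / ((x - 1) * ((b - 1) * x + 1) ^ 2)) x := by
  have h1x : 1 - x ≠ 0 := sub_ne_zero.mpr hx.symm
  have hx1 : x - 1 ≠ 0 := sub_ne_zero.mpr hx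
  have hlog := (hasDerivAt_one_add_mul_div_one_sub (b := b) hx).log
    (by rw [one_add_mul_div_one_sub hx]; exact div_ne_zero hu h1x)
  have hrecip := (hasDerivAt_const x b).div
    (((hasDerivAt_id x).const_mul (b - 1)).add_const 1) hu
  refine (hlog.neg.add hrecip).congr_deriv ?_
  rw [one_add_mul_div_one_sub hx]
  simp only [id]
  field_simp
  ring

lemma deriv_deriv_g (hb : 0 ≤ b) (hx : x ∈ Ioo (0 : ℝ) 1) :
    deriv (deriv (g b)) x = b ^ 2 / ((x - 1) * ((b - 1) * x + 1) ^ 2) := by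
  have hderiv : deriv (g b) =ᶠ[nhds x] g' b := by
    filter_upwards [isOpen_Ioo.mem_nhds hx] with y hy
    exact (hasDerivAt_g hy.2.ne (sub_one_mul_add_one_pos hb hy).ne').deriv
  rw [hderiv.deriv_eq]
  exact (hasDerivAt_g' hx.2.ne (sub_one_mul_add_one_pos hb hx).ne').deriv

lemma sq_div_sub_one_mul_sq_neg (hb : b ≠ 0) (hx : x < 1) (hu : (b - 1) * x + 1 ≠ 0) :
    b ^ 2 / ((x - 1) * ((b - 1) * x + 1) ^ 2) < 0 :=
  div_neg_of_pos_of_neg (by positivity) (mul_neg_of_neg_of_pos (by linarith) (by positivity))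

end LogPerspective

open LogPerspective in
/-- For `b > 0`, `g x = (1-x) * log (1 + b*x/(1-x))` is strictly concave on `(0,1)`,
with second derivative `g'' x = b^2 / ((x-1)*((b-1)*x+1)^2) < 0`. -/
theorem stmt_4 (b : ℝ) (hb : 0 < b) :
    StrictConcaveOn ℝ (Set.Ioo (0:ℝ) 1)
      (fun x => (1 - x) * Real.log (1 + b * x / (1 - x))) ∧
    ∀ x ∈ Set.Ioo (0:ℝ) 1,
      deriv (deriv (fun x => (1 - x) * Real.log (1 + b * x / (1 - x)))) x =
        b ^ 2 / ((x - 1) * ((b - 1) * x + 1) ^ 2) ∧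
      b ^ 2 / ((x - 1) * ((b - 1) * x + 1) ^ 2) < 0 := by
  have hneg : ∀ x ∈ Ioo (0 : ℝ) 1, b ^ 2 / ((x - 1) * ((b - 1) * x + 1) ^ 2) < 0 :=
    fun x hx => sq_div_sub_one_mul_sq_neg hb.ne' hx.2 (sub_one_mul_add_one_pos hb.le hx).ne'
  refine ⟨?_, fun x hx => ⟨deriv_deriv_g hb.le hx, hneg x hx⟩⟩
  refine strictConcaveOn_of_deriv2_neg' (convex_Ioo 0 1) ?_ fun x hx => ?_
  · exact fun x hx =>
      (hasDerivAt_g hx.2.ne (sub_one_mul_add_one_pos hb.le hx).ne').continuousAt.continuousWithinAt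
  · rw [Function.iterate_succ_apply, Function.iterate_one]
    exact (deriv_deriv_g hb.le hx).trans_lt (hneg x hx)
end

section
/- Let b > 0 and define g(x) = (1-x)·ln(1 + bx/(1-x)) for 0 < x < 1. Then g attains its unique maximum at x* = (e^{W((b-1)/e)+1} - 1)/(b + e^{W((b-1)/e)+1} - 1), where W is the Lambert W function (principal branch). -/
/-!
Put `E = e^{w+1}`, so that `w e^w = (b-1)/e` becomes `E log E = b + E - 1`, and substitute
`s = 1 + b x/(1-x)`, for which `(1-x) s = 1 - x + b x`. The tangent line of `log` at `E` gives
`log s ≤ log E + s/E - 1`, with equality only at `s = E`; multiplying by `1 - x`, the right-hand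
side collapses to the constant `b / E`. Hence `g ≤ b/E` on `(0,1)`, with equality exactly where
`1 + b x/(1-x) = E`, i.e. at `x = (E - 1)/(b + E - 1)`.
-/

open Real

namespace Real

lemma log_lt_log_add_div_sub_one {a s : ℝ} (ha : 0 < a) (hs : 0 < s) (hne : s ≠ a) :
    log s < log a + s / a - 1 := by
  have hsa : s / a ≠ 1 := fun h => hne (by rwa [div_eq_one_iff_eq ha.ne'] at h)
  have := log_lt_sub_one_of_pos (div_pos hs ha) hsa
  rw [log_div hs.ne' ha.ne'] at this
  linarith

end Real

section LambertMaximum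

variable {b E x : ℝ}

lemma one_sub_mul_log_lt_div (hb : 0 ≤ b) (hE : 0 < E) (hbE : E * log E = b + E - 1)
    (hx0 : 0 ≤ x) (hx1 : x < 1) (hne : 1 + b * x / (1 - x) ≠ E) :
    (1 - x) * log (1 + b * x / (1 - x)) < b / E := by
  have h1x : 0 < 1 - x := by linarith
  have hs : 0 < 1 + b * x / (1 - x) := by positivity
  have htangent := mul_lt_mul_of_pos_left (log_lt_log_add_div_sub_one hE hs hne) h1x
  have hconst : (1 - x) * (log E + (1 + b * x / (1 - x)) / E - 1) = b / E := by
    field_simp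
    linear_combination (1 - x) * hbE
  linarith

lemma div_add_sub_one_mem_Ioo (hb : 0 < b) (hE : 1 < E) :
    (E - 1) / (b + E - 1) ∈ Set.Ioo (0 : ℝ) 1 :=
  ⟨div_pos (by linarith) (by linarith), (div_lt_one (by linarith)).mpr (by linarith)⟩

lemma one_add_mul_div_one_sub_eq_iff (hden : b + E - 1 ≠ 0) (hx : x ≠ 1) :
    1 + b * x / (1 - x) = E ↔ x = (E - 1) / (b + E - 1) := by
  have h1x : 1 - x ≠ 0 := sub_ne_zero.mpr hx.symm
  rw [eq_div_iff hden, add_div' _ _ _ h1x, div_eq_iff h1x]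
  constructor <;> intro h <;> linear_combination h

lemma one_sub_mul_log_eq_div (hb : 0 < b) (hE : 1 < E) (hbE : E * log E = b + E - 1) :
    (1 - (E - 1) / (b + E - 1)) *
        log (1 + b * ((E - 1) / (b + E - 1)) / (1 - (E - 1) / (b + E - 1))) = b / E := by
  have hden : b + E - 1 ≠ 0 := by linarith
  rw [(one_add_mul_div_one_sub_eq_iff hden (div_add_sub_one_mem_Ioo hb hE).2.ne).mpr rfl]
  have hE0 : E ≠ 0 := by linarith
  field_simp
  linear_combination b * hbE

end LambertMaximum

/-- For `b > 0`, `g x = (1-x) * log (1 + b*x/(1-x))` attains its unique maximum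
on `(0,1)` at `x* = (e^{W((b-1)/e)+1} - 1)/(b + e^{W((b-1)/e)+1} - 1)`, where `w = W((b-1)/e)`
is the principal Lambert W value, i.e. `w * e^w = (b-1)/e` with `w ≥ -1`. -/
theorem stmt_5 (b : ℝ) (hb : 0 < b) (w : ℝ) (hw : w * Real.exp w = (b - 1) / Real.exp 1)
    (hw' : -1 ≤ w) :
    (Real.exp (w + 1) - 1) / (b + Real.exp (w + 1) - 1) ∈ Set.Ioo (0:ℝ) 1 ∧
    ∀ x ∈ Set.Ioo (0:ℝ) 1,
      x ≠ (Real.exp (w + 1) - 1) / (b + Real.exp (w + 1) - 1) →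
      (1 - x) * Real.log (1 + b * x / (1 - x)) <
        (1 - (Real.exp (w + 1) - 1) / (b + Real.exp (w + 1) - 1)) *
          Real.log (1 + b * ((Real.exp (w + 1) - 1) / (b + Real.exp (w + 1) - 1)) /
            (1 - (Real.exp (w + 1) - 1) / (b + Real.exp (w + 1) - 1))) := by
  have hbE : exp (w + 1) * log (exp (w + 1)) = b + exp (w + 1) - 1 := by
    rw [log_exp, exp_add]
    field_simp at hw
    linear_combination hw
  have hw1 : -1 < w := by
    refine lt_of_le_of_ne hw' fun h => ?_
    rw [← h, neg_add_cancel, exp_zero, log_one] at hbE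
    linarith
  have hE : 1 < exp (w + 1) := one_lt_exp_iff.mpr (by linarith)
  refine ⟨div_add_sub_one_mem_Ioo hb hE, fun x ⟨hx0, hx1⟩ hne => ?_⟩
  rw [one_sub_mul_log_eq_div hb hE hbE]
  exact one_sub_mul_log_lt_div hb.le (exp_pos _) hbE hx0.le hx1
    (mt (one_add_mul_div_one_sub_eq_iff (by linarith) hx1.ne).mp hne)
end

section
/- For b > 0, the substitution y = 1 + bx/(1-x) transforms the stationarity condition of g(x) = (1-x)ln(1+bx/(1-x)) into the equation b - 1 + y = y·ln y, and the unique solution with y > 1 is y = exp(W((b-1)/e) + 1), where W is the principal Lambert W function. -/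
lemma texp_strictMonoOn : StrictMonoOn (fun t : ℝ => t * Real.exp t) (Set.Ici (-1)) := by
  apply strictMonoOn_of_deriv_pos (convex_Ici _)
  · fun_prop
  · intro x hx
    rw [interior_Ici] at hx
    have h : HasDerivAt (fun t : ℝ => t * Real.exp t) (1 * Real.exp x + x * Real.exp x) x :=
      (hasDerivAt_id x).mul (Real.hasDerivAt_exp x)
    rw [h.deriv]
    nlinarith [Real.exp_pos x, Set.mem_Ioi.mp hx]

/-- For `b > 0`, with `w = W((b-1)/e)` the principal Lambert W value
(`w * e^w = (b-1)/e`, `w ≥ -1`), the number `y = exp (w + 1)` satisfies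
`b - 1 + y = y * log y`, and it is the unique solution with `y > 1`. -/
theorem stmt_6 (b : ℝ) (hb : 0 < b) (w : ℝ) (hw : w * Real.exp w = (b - 1) / Real.exp 1)
    (hw' : -1 ≤ w) :
    (b - 1 + Real.exp (w + 1) = Real.exp (w + 1) * Real.log (Real.exp (w + 1))) ∧
    ∀ y : ℝ, 1 < y → b - 1 + y = y * Real.log y → y = Real.exp (w + 1) := by
  have he : (0:ℝ) < Real.exp 1 := Real.exp_pos 1
  have hkey : Real.exp (w + 1) * w = b - 1 := by
    rw [Real.exp_add]
    have := hw
    field_simp at this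
    nlinarith [this]
  constructor
  · rw [Real.log_exp]
    nlinarith [hkey]
  · intro y hy hy2
    have hly : 0 < Real.log y := Real.log_pos hy
    have hy0 : 0 < y := by linarith
    set u := Real.log y - 1 with hu
    have hyu : y = Real.exp (u + 1) := by
      rw [hu]; ring_nf; rw [Real.exp_log hy0]
    have huu : u * Real.exp u = (b - 1) / Real.exp 1 := by
      have h1 : y * u = b - 1 := by rw [hu]; nlinarith [hy2]
      have h2 : Real.exp (u + 1) = Real.exp u * Real.exp 1 := Real.exp_add u 1
      rw [hyu, h2] at h1
      field_simp
      nlinarith [h1]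
    have hu1 : u ∈ Set.Ici (-1:ℝ) := Set.mem_Ici.mpr (by simp [hu]; linarith)
    have := texp_strictMonoOn.injOn hu1 (Set.mem_Ici.mpr hw') (by show u * Real.exp u = w * Real.exp w; rw [huu, hw])
    rw [hyu, this]
end

section
/- Let a ∈ ℝ and define g(x) = (1-x)·(ln(x/(1-x)) + a) for 0 < x < 1. Then g attains its unique maximum at x* = e^{W(e^{a-1})+1-a}/(e^{W(e^{a-1})+1-a} + 1), where W is the principal Lambert W function. -/
/-!
Substituting `x = σ t` (the logistic sigmoid, so `t = log (x / (1 - x))`) turns `g` into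
`t ↦ (t + a) / (1 + eᵗ)`, whose critical point `t₀` is characterised by `t₀ + a = 1 + e^{-t₀}`;
there the value is `e^{-t₀}`, and `(t + a) / (1 + eᵗ) < e^{-t₀}` is equivalent to
`(t - t₀) + 1 < e^{t - t₀}`. With `t₀ = w + 1 - a` the Lambert equation `w e^w = e^{a-1}` says
exactly `e^{-t₀} = w`, i.e. that `t₀` is the critical point, and `σ t₀ = x*`.
-/

open Real

lemma sigmoid_neg_eq_inv (t : ℝ) : sigmoid (-t) = (1 + exp t)⁻¹ := by
  rw [sigmoid_def, neg_neg]

lemma sigmoid_eq_exp_div (t : ℝ) : sigmoid t = exp t / (exp t + 1) := by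
  rw [sigmoid_def, exp_neg]
  field_simp

lemma log_sigmoid_div_one_sub_sigmoid (t : ℝ) : log (sigmoid t / (1 - sigmoid t)) = t := by
  rw [← sigmoid_neg, ← sigmoid_mul_rexp_neg, div_mul_cancel_left₀ (sigmoid_pos t).ne', exp_neg,
    inv_inv, log_exp]

section CriticalPoint

variable {a t₀ : ℝ}

lemma sigmoid_neg_mul_add_eq_exp_neg (h₀ : t₀ + a = 1 + exp (-t₀)) :
    sigmoid (-t₀) * (t₀ + a) = exp (-t₀) := by
  rw [sigmoid_neg_eq_inv, h₀, exp_neg]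
  field_simp
  ring

lemma sigmoid_neg_mul_add_lt_exp_neg (h₀ : t₀ + a = 1 + exp (-t₀)) {t : ℝ} (ht : t ≠ t₀) :
    sigmoid (-t) * (t + a) < exp (-t₀) := by
  rw [sigmoid_neg_eq_inv, inv_mul_eq_div, div_lt_iff₀ (by positivity)]
  calc t + a = (t - t₀) + 1 + exp (-t₀) := by linarith
    _ < exp (t - t₀) + exp (-t₀) := by gcongr; exact add_one_lt_exp (sub_ne_zero.2 ht)
    _ = exp (-t₀) * (1 + exp t) := by rw [sub_eq_add_neg, exp_add]; ring

lemma sigmoid_neg_mul_add_lt (h₀ : t₀ + a = 1 + exp (-t₀)) {t : ℝ} (ht : t ≠ t₀) :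
    sigmoid (-t) * (t + a) < sigmoid (-t₀) * (t₀ + a) :=
  sigmoid_neg_mul_add_eq_exp_neg h₀ ▸ sigmoid_neg_mul_add_lt_exp_neg h₀ ht

end CriticalPoint

theorem stmt_8_general (a : ℝ) (w : ℝ) (hw : w * Real.exp w = Real.exp (a - 1)) :
    Real.exp (w + 1 - a) / (Real.exp (w + 1 - a) + 1) ∈ Set.Ioo (0:ℝ) 1 ∧
    ∀ x ∈ Set.Ioo (0:ℝ) 1,
      x ≠ Real.exp (w + 1 - a) / (Real.exp (w + 1 - a) + 1) →
      (1 - x) * (Real.log (x / (1 - x)) + a) <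
        (1 - Real.exp (w + 1 - a) / (Real.exp (w + 1 - a) + 1)) *
          (Real.log ((Real.exp (w + 1 - a) / (Real.exp (w + 1 - a) + 1)) /
            (1 - Real.exp (w + 1 - a) / (Real.exp (w + 1 - a) + 1))) + a) := by
  set t₀ := w + 1 - a
  have hcrit : t₀ + a = 1 + exp (-t₀) := by
    have hexp : exp (-t₀) = w := by
      rw [show -t₀ = (a - 1) - w by ring, exp_sub, ← hw, mul_div_cancel_right₀ _ (exp_pos w).ne']
    linarith
  rw [← sigmoid_eq_exp_div]
  refine ⟨⟨sigmoid_pos t₀, sigmoid_lt_one t₀⟩, ?_⟩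
  rintro x hx hne
  obtain ⟨t, rfl⟩ : x ∈ Set.range sigmoid := range_sigmoid ▸ hx
  have ht : t ≠ t₀ := fun h => hne (h ▸ rfl)
  simpa only [sigmoid_neg, log_sigmoid_div_one_sub_sigmoid] using sigmoid_neg_mul_add_lt hcrit ht

/-- For `a ∈ ℝ`, `g x = (1-x)*(log (x/(1-x)) + a)` attains its unique maximum
on `(0,1)` at `x* = e^{W(e^{a-1})+1-a}/(e^{W(e^{a-1})+1-a} + 1)`, where `w = W(e^{a-1})`
is the principal Lambert W value, i.e. `w * e^w = e^{a-1}` with `w ≥ 0`. -/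
theorem stmt_8 (a : ℝ) (w : ℝ) (hw : w * Real.exp w = Real.exp (a - 1)) (hw' : 0 ≤ w) :
    Real.exp (w + 1 - a) / (Real.exp (w + 1 - a) + 1) ∈ Set.Ioo (0:ℝ) 1 ∧
    ∀ x ∈ Set.Ioo (0:ℝ) 1,
      x ≠ Real.exp (w + 1 - a) / (Real.exp (w + 1 - a) + 1) →
      (1 - x) * (Real.log (x / (1 - x)) + a) <
        (1 - Real.exp (w + 1 - a) / (Real.exp (w + 1 - a) + 1)) *
          (Real.log ((Real.exp (w + 1 - a) / (Real.exp (w + 1 - a) + 1)) /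
            (1 - Real.exp (w + 1 - a) / (Real.exp (w + 1 - a) + 1))) + a) :=
  stmt_8_general a w hw
end

section
/- Define f(x,y) = sqrt((x/y)^2 + 4x/y) - x/y for x, y > 0. Then f is strictly increasing in x and strictly decreasing in y. -/
/-!
With `t = x / y`, `f(x, y) = √(t² + 4t) - t`, so it suffices that `t ↦ √(t² + 4t) - t` is strictly
increasing on `t > 0`. Rationalising gives `√(t² + 4t) - t = 4 / (√(1 + 4/t) + 1)`, and the right
side is visibly increasing in `t`.
-/

open Real Set

lemma sqrt_sq_add_mul_sub_self {c t : ℝ} (hc : 0 ≤ c) (ht : 0 < t) :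
    √(t ^ 2 + c * t) - t = c / (√(1 + c / t) + 1) := by
  rw [eq_div_iff (by positivity)]
  have hsqrt : √(t ^ 2 + c * t) = t * √(1 + c / t) := by
    rw [← sqrt_sq ht.le, ← sqrt_mul (sq_nonneg t), sqrt_sq ht.le]
    congr 1
    field_simp
  have hsq : √(1 + c / t) ^ 2 = 1 + c / t := sq_sqrt (by positivity)
  calc (√(t ^ 2 + c * t) - t) * (√(1 + c / t) + 1)
        = (t * √(1 + c / t) - t) * (√(1 + c / t) + 1) := by rw [hsqrt]
    _ = t * (√(1 + c / t) ^ 2 - 1) := by ring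
    _ = c := by rw [hsq]; field_simp; ring

lemma strictMonoOn_sqrt_sq_add_mul_sub_self {c : ℝ} (hc : 0 < c) :
    StrictMonoOn (fun t : ℝ => √(t ^ 2 + c * t) - t) (Ioi 0) := by
  intro a (ha : 0 < a) b (hb : 0 < b) hab
  simp only [sqrt_sq_add_mul_sub_self hc.le ha, sqrt_sq_add_mul_sub_self hc.le hb]
  gcongr

/-- `f (x,y) = √((x/y)^2 + 4x/y) - x/y` (for `x, y > 0`) is strictly increasing
in `x` and strictly decreasing in `y`. -/
theorem stmt_9 :
    (∀ y : ℝ, 0 < y →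
      StrictMonoOn (fun x : ℝ => Real.sqrt ((x / y) ^ 2 + 4 * x / y) - x / y)
        (Set.Ioi (0:ℝ))) ∧
    (∀ x : ℝ, 0 < x →
      StrictAntiOn (fun y : ℝ => Real.sqrt ((x / y) ^ 2 + 4 * x / y) - x / y)
        (Set.Ioi (0:ℝ))) := by
  simp only [mul_div_assoc]
  have hmono := strictMonoOn_sqrt_sq_add_mul_sub_self (c := 4) (by norm_num)
  refine ⟨fun y hy x₁ hx₁ x₂ hx₂ hx => ?_, fun x hx y₁ hy₁ y₂ hy₂ hy => ?_⟩
  · exact hmono (div_pos hx₁ hy) (div_pos hx₂ hy) (div_lt_div_of_pos_right hx hy)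
  · exact hmono (div_pos hx hy₂) (div_pos hx hy₁) (div_lt_div_of_pos_left hx hy₁ hy)
end

section
/- Let h be a random variable such that Y = ‖h‖² follows a Gamma distribution with shape Nm and rate m (pdf p(y) = m^{Nm}/Γ(Nm) · y^{Nm-1} e^{-my}), and let G be an independent exponential random variable with rate 1. Then for x > 0, P(Y·G ≤ x) = 1 - (2(mx)^{Nm/2}/Γ(Nm))·K_{Nm}(2√(mx)), where K_ν is the modified Bessel function of the second kind. -/
/-!
Conditionally on `Y = y > 0`, the event `Y·G > x` is the exponential tail `G > x/y`, of
probability `e^{-x/y}`; hence `P(Y·G ≤ x) = 1 - E[e^{-x/Y}]`. Against the Gamma density the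
scaling `u = m y` and the inversion `u = mx/t` turn this expectation into the integral
representation of `K_{Nm}(2√(mx))`.
-/

open MeasureTheory ProbabilityTheory Set

/-- The modified Bessel function of the second kind, via its standard integral
representation `K_ν(z) = (1/2)(z/2)^ν ∫₀^∞ exp(-t - z²/(4t)) t^{-ν-1} dt` (for `z > 0`). -/
noncomputable def besselK (ν z : ℝ) : ℝ :=
  (1 / 2) * (z / 2) ^ ν * ∫ t in Set.Ioi (0:ℝ), Real.exp (-t - z ^ 2 / (4 * t)) * t ^ (-ν - 1)

open Real

theorem integral_comp_div_Ioi {E : Type*} [NormedAddCommGroup E] [NormedSpace ℝ E]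
    (g : ℝ → E) {a : ℝ} (ha : 0 < a) :
    ∫ t in Ioi 0, (a / t ^ 2) • g (a / t) = ∫ y in Ioi 0, g y := by
  have himage : (a / ·) '' Ioi 0 = Ioi (0 : ℝ) := by
    refine Subset.antisymm (image_subset_iff.2 fun t ht => div_pos ha ht) fun y hy => ?_
    exact ⟨a / y, div_pos ha hy, div_div_cancel₀ ha.ne'⟩
  have hderiv : ∀ t ∈ Ioi (0 : ℝ), HasDerivWithinAt (a / ·) (-(a / t ^ 2)) (Ioi 0) t := by
    intro t ht
    simpa [div_eq_mul_inv] using ((hasDerivAt_inv ht.ne').const_mul a).hasDerivWithinAt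
  have hinj : InjOn (a / ·) (Ioi (0 : ℝ)) := fun s _ t _ h => by
    simpa only [div_eq_mul_inv, mul_right_inj' ha.ne', inv_inj] using h
  conv_rhs => rw [← himage, integral_image_eq_integral_abs_deriv_smul measurableSet_Ioi hderiv hinj]
  refine setIntegral_congr_fun measurableSet_Ioi fun t ht => ?_
  rw [abs_neg, abs_of_pos (div_pos ha (pow_pos ht 2))]

theorem besselK_two_mul_sqrt (ν : ℝ) {a : ℝ} (ha : 0 ≤ a) :
    besselK ν (2 * √a) = a ^ (ν / 2) / 2 * ∫ t in Ioi 0, exp (-t - a / t) * t ^ (-ν - 1) := by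
  have hsq : (2 * √a) ^ 2 = 4 * a := by rw [mul_pow, sq_sqrt ha]; norm_num
  have hpow : √a ^ ν = a ^ (ν / 2) := by
    rw [sqrt_eq_rpow, ← rpow_mul ha, one_div_mul_eq_div]
  simp only [besselK, hsq, mul_div_mul_left _ _ (four_ne_zero' ℝ),
    mul_div_cancel_left₀ _ (two_ne_zero' ℝ), hpow]
  ring

theorem integral_rpow_mul_exp_neg_sub_div (ν : ℝ) {a : ℝ} (ha : 0 < a) :
    ∫ y in Ioi 0, y ^ (ν - 1) * exp (-y - a / y) = 2 * a ^ (ν / 2) * besselK ν (2 * √a) := by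
  rw [besselK_two_mul_sqrt ν ha.le,
    ← integral_comp_div_Ioi (fun y : ℝ => y ^ (ν - 1) * exp (-y - a / y)) ha,
    ← integral_const_mul, ← integral_const_mul]
  refine setIntegral_congr_fun measurableSet_Ioi fun t (ht : 0 < t) => ?_
  have hpow : a / t ^ 2 * (a / t) ^ (ν - 1) = a ^ (ν / 2) * a ^ (ν / 2) * t ^ (-ν - 1) := by
    rw [← rpow_add ha, add_halves, div_rpow ha.le ht.le, rpow_sub_one ha.ne',
      show -ν - 1 = -(ν - 1) - 2 by ring, rpow_sub ht (-(ν - 1)) 2, rpow_neg ht.le, rpow_two]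
    field_simp
  rw [smul_eq_mul, ← mul_assoc, hpow, div_div_cancel₀ ha.ne',
    show -(a / t) - t = -t - a / t by ring]
  ring

theorem integral_gammaPDFReal_mul_exp_neg_div (a : ℝ) {r x : ℝ} (hr : 0 < r) (hx : 0 < x) :
    ∫ y in Ioi 0, gammaPDFReal a r y * exp (-(x / y)) =
      2 * (r * x) ^ (a / 2) / Gamma a * besselK a (2 * √(r * x)) := by
  set f : ℝ → ℝ := fun u => u ^ (a - 1) * exp (-u - r * x / u)
  have hscale : ∀ y ∈ Ioi (0 : ℝ),
      gammaPDFReal a r y * exp (-(x / y)) = (Gamma a)⁻¹ * r * f (r * y) := by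
    intro y (hy : 0 < y)
    rw [gammaPDFReal, if_pos hy.le]
    simp only [f]
    rw [mul_rpow hr.le hy.le, rpow_sub_one hr.ne',
      mul_div_mul_left _ _ hr.ne', exp_sub, exp_neg (x / y)]
    field_simp
  rw [setIntegral_congr_fun measurableSet_Ioi hscale, integral_const_mul,
    integral_comp_mul_left_Ioi f 0 hr, mul_zero, smul_eq_mul,
    integral_rpow_mul_exp_neg_sub_div a (mul_pos hr hx)]
  field_simp

theorem expMeasure_Ioi {r a : ℝ} (hr : 0 < r) (ha : 0 ≤ a) :
    expMeasure r (Ioi a) = ENNReal.ofReal (exp (-(r * a))) := by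
  have := isProbabilityMeasure_expMeasure hr
  have hle : exp (-(r * a)) ≤ 1 := exp_le_one_iff.2 (neg_nonpos.2 (mul_nonneg hr.le ha))
  rw [← compl_Iic, prob_compl_eq_one_sub measurableSet_Iic, ← ofReal_cdf, cdf_expMeasure_eq hr,
    if_pos ha, ← ENNReal.ofReal_one, ← ENNReal.ofReal_sub _ (sub_nonneg.2 hle), sub_sub_cancel]

theorem gammaMeasure_Iic_zero (a r : ℝ) : gammaMeasure a r (Iic 0) = 0 := by
  rw [gammaMeasure, withDensity_apply _ measurableSet_Iic, ← setLIntegral_congr Iio_ae_eq_Iic,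
    lintegral_gammaPDF_of_nonpos le_rfl]

theorem ae_gammaMeasure_pos (a r : ℝ) : ∀ᵐ y ∂gammaMeasure a r, 0 < y := by
  refine ae_iff.2 ?_
  simp only [not_lt]
  exact gammaMeasure_Iic_zero a r

theorem integral_gammaMeasure {a r : ℝ} (ha : 0 < a) (hr : 0 < r) (f : ℝ → ℝ) :
    ∫ y, f y ∂gammaMeasure a r = ∫ y in Ioi 0, gammaPDFReal a r y * f y := by
  conv_lhs => rw [← Measure.restrict_eq_self_of_ae_mem (s := Ioi 0) (ae_gammaMeasure_pos a r)]
  rw [gammaMeasure, restrict_withDensity measurableSet_Ioi,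
    integral_withDensity_eq_integral_toReal_smul
      (show Measurable (gammaPDF a r) from (measurable_gammaPDFReal a r).ennreal_ofReal)
      (ae_of_all _ fun _ => ENNReal.ofReal_lt_top)]
  simp only [gammaPDF, ENNReal.toReal_ofReal (gammaPDFReal_nonneg ha hr _), smul_eq_mul]

theorem measurableSet_setOf_lt_mul (x : ℝ) : MeasurableSet {p : ℝ × ℝ | x < p.1 * p.2} :=
  measurableSet_lt measurable_const (measurable_fst.mul measurable_snd)

theorem prod_expMeasure_setOf_lt_mul {ν : Measure ℝ} [IsFiniteMeasure ν] (hν : ∀ᵐ y ∂ν, 0 < y)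
    {r x : ℝ} (hr : 0 < r) (hx : 0 ≤ x) :
    ν.prod (expMeasure r) {p | x < p.1 * p.2} = ENNReal.ofReal (∫ y, exp (-(r * (x / y))) ∂ν) := by
  have hint : Integrable (fun y => exp (-(r * (x / y)))) ν := by
    refine Integrable.of_bound (by fun_prop : Measurable _).aestronglyMeasurable 1 ?_
    filter_upwards [hν] with y hy
    rw [norm_of_nonneg (exp_pos _).le, exp_le_one_iff, neg_nonpos]
    positivity
  have := isProbabilityMeasure_expMeasure hr
  rw [Measure.prod_apply (measurableSet_setOf_lt_mul x),
    ofReal_integral_eq_lintegral_ofReal hint (ae_of_all _ fun _ => (exp_pos _).le)]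
  refine lintegral_congr_ae (hν.mono fun y hy => ?_)
  have hslice : Prod.mk y ⁻¹' {p : ℝ × ℝ | x < p.1 * p.2} = Ioi (x / y) := by
    ext g
    simp only [mem_preimage, mem_ofPred_eq, mem_Ioi, div_lt_iff₀' hy]
  dsimp only
  rw [hslice, expMeasure_Ioi hr (div_nonneg hx hy.le)]

/-- If `Y ~ Gamma(Nm, m)` and `G ~ Exp(1)` are independent, then for `x > 0`,
`P(Y·G ≤ x) = 1 - 2(mx)^{Nm/2}/Γ(Nm) · K_{Nm}(2√(mx))`. -/
theorem stmt_13 (N m : ℕ) (hN : 0 < N) (hm : 0 < m)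
    {Ω : Type*} [MeasureSpace Ω] (μ : Measure Ω) [IsProbabilityMeasure μ]
    (Y G : Ω → ℝ) (hYG : IndepFun Y G μ)
    (hY : Measure.map Y μ = gammaMeasure ((N * m : ℕ) : ℝ) (m : ℝ))
    (hG : Measure.map G μ = expMeasure 1)
    (x : ℝ) (hx : 0 < x) :
    μ {ω | Y ω * G ω ≤ x} =
      ENNReal.ofReal (1 - 2 * ((m : ℝ) * x) ^ (((N * m : ℕ) : ℝ) / 2) /
        Real.Gamma ((N * m : ℕ) : ℝ) *
          besselK ((N * m : ℕ) : ℝ) (2 * Real.sqrt ((m : ℝ) * x))) := by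
  set ν : ℝ := ((N * m : ℕ) : ℝ)
  have hν : 0 < ν := Nat.cast_pos.2 (Nat.mul_pos hN hm)
  have hr : (0 : ℝ) < m := Nat.cast_pos.2 hm
  have := isProbabilityMeasure_gammaMeasure hν hr
  have := isProbabilityMeasure_expMeasure one_pos
  have hYm : AEMeasurable Y μ := aemeasurable_of_map_neZero (by rw [hY]; infer_instance)
  have hGm : AEMeasurable G μ := aemeasurable_of_map_neZero (by rw [hG]; infer_instance)
  have hlaw : μ.map (fun ω => (Y ω, G ω)) = (gammaMeasure ν m).prod (expMeasure 1) := by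
    rw [← hY, ← hG]
    exact (indepFun_iff_map_prod_eq_prod_map_map hYm hGm).1 hYG
  have hS := measurableSet_setOf_lt_mul x
  calc μ {ω | Y ω * G ω ≤ x} = μ.map (fun ω => (Y ω, G ω)) {p | x < p.1 * p.2}ᶜ := by
        rw [Measure.map_apply_of_aemeasurable (hYm.prodMk hGm) hS.compl]
        simp only [preimage_ofPred_eq, compl_ofPred, not_lt]
    _ = 1 - ENNReal.ofReal (∫ y, exp (-(1 * (x / y))) ∂gammaMeasure ν m) := by
        rw [hlaw, prob_compl_eq_one_sub hS,
          prod_expMeasure_setOf_lt_mul (ae_gammaMeasure_pos ν m) one_pos hx.le]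
    _ = _ := by
        rw [← ENNReal.ofReal_one, ← ENNReal.ofReal_sub _ (integral_nonneg fun y => (exp_pos _).le),
          integral_gammaMeasure hν hr]
        simp only [one_mul, integral_gammaPDFReal_mul_exp_neg_div ν hr hx]
end
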